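/- arXiv:1305.4826 — 2 statements merged into one kernel-verified Lean document; each statement's English description precedes it below -/
import Mathlib

section
/- Let G be an abelian topological group and U a quasi-convex neighbourhood of 0. Then the family {(1/n)U : n ∈ N} satisfies the axioms of a neighbourhood basis at 0 for a group topology on G; in particular (1/(2n))U + (1/(2n))U ⊆ (1/n)U for all n. -/
open Pointwise

/-- `T₊ = [-1/4, 1/4] + ℤ` inside the circle `𝕋 = ℝ/ℤ`. -/
def Tpos : Set (AddCircle (1 : ℝ)) :=
  {x | ∃ r : ℝ, |r| ≤ 1 / 4 ∧ (r : AddCircle (1 : ℝ)) = x}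

/-- Quasi-convexity of a subset of an abelian topological group. -/
def QuasiConvex {G : Type*} [AddCommGroup G] [TopologicalSpace G] (A : Set G) : Prop :=
  ∀ x ∉ A, ∃ χ : ContinuousAddMonoidHom G (AddCircle (1 : ℝ)),
    (∀ a ∈ A, χ a ∈ Tpos) ∧ χ x ∉ Tpos

/-- `(1/n)U = {x : kx ∈ U for 1 ≤ k ≤ n}`. -/
def oneOver {G : Type*} [AddCommGroup G] (n : ℕ) (U : Set G) : Set G :=
  {x : G | ∀ k : ℕ, 1 ≤ k → k ≤ n → k • x ∈ U}

/-! Quasi-convexity means that membership in `U` can be tested on the continuous characters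
`χ : G → 𝕋` with `χ(U) ⊆ T₊`, and `T₊` is the closed ball of radius `1/4` in `𝕋`. If
`t, 2t, …, mt` all lie in `T₊`, then `‖t‖ ≤ 1/(4m)`: the multiples of a representative of `t` in
`[-1/2, 1/2]` cannot wrap around. Hence for `x, y ∈ (1/(2n))U` and `k ≤ n`,
`‖k χ(x + y)‖ ≤ n (‖χ x‖ + ‖χ y‖) ≤ 1/4`, so `k (x + y) ∈ U`. -/

namespace UnitAddCircle

theorem exists_coe_eq_abs_eq_norm (t : AddCircle (1 : ℝ)) :
    ∃ r : ℝ, (r : AddCircle (1 : ℝ)) = t ∧ |r| = ‖t‖ := by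
  obtain ⟨x, rfl⟩ := QuotientAddGroup.mk_surjective t
  refine ⟨x - round x, ?_, UnitAddCircle.norm_eq.symm⟩
  rw [AddCircle.coe_sub, sub_eq_self, AddCircle.coe_eq_zero_iff]
  exact ⟨round x, by simp⟩

theorem norm_coe_eq_abs {r : ℝ} (hr : |r| ≤ 1 / 2) : ‖(r : AddCircle (1 : ℝ))‖ = |r| :=
  (AddCircle.norm_coe_eq_abs_iff 1 one_ne_zero).2 (by simpa using hr)

theorem mul_norm_le_of_forall_nsmul_norm_le {t : AddCircle (1 : ℝ)} {m : ℕ}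
    (h : ∀ j : ℕ, 1 ≤ j → j ≤ m → ‖j • t‖ ≤ 1 / 4) : m * ‖t‖ ≤ 1 / 4 := by
  induction m with
  | zero => simp
  | succ m ih =>
    have hm : m * ‖t‖ ≤ 1 / 4 := ih fun j hj hjm ↦ h j hj (by omega)
    have h1 : ‖t‖ ≤ 1 / 4 := by simpa using h 1 le_rfl (by omega)
    obtain ⟨r, rfl, hr⟩ := exists_coe_eq_abs_eq_norm t
    -- `m|r| ≤ 1/4` and `|r| ≤ 1/4` keep `(m+1) r` inside `[-1/2, 1/2]`, where the norm is `|·|`.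
    have hsmall : |(m + 1 : ℝ) * r| ≤ 1 / 2 := by
      rw [abs_mul, abs_of_pos (by positivity), hr]
      linarith
    have := h (m + 1) (by omega) le_rfl
    rw [← AddCircle.coe_nsmul, nsmul_eq_mul, Nat.cast_succ, norm_coe_eq_abs hsmall, abs_mul,
      abs_of_pos (by positivity), hr] at this
    simpa using this

end UnitAddCircle

open UnitAddCircle

theorem mem_Tpos_iff_norm_le {t : AddCircle (1 : ℝ)} : t ∈ Tpos ↔ ‖t‖ ≤ 1 / 4 := by
  constructor
  · rintro ⟨r, hr, rfl⟩
    rw [norm_coe_eq_abs (by linarith)]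
    exact hr
  · intro ht
    obtain ⟨r, rfl, hr⟩ := exists_coe_eq_abs_eq_norm t
    exact ⟨r, hr ▸ ht, rfl⟩

section oneOver

variable {G : Type*} [AddCommGroup G] {U : Set G}

theorem zero_mem_oneOver (hU : (0 : G) ∈ U) (n : ℕ) : (0 : G) ∈ oneOver n U :=
  fun k _ _ ↦ by simpa using hU

theorem neg_oneOver (hU : ∀ x ∈ U, -x ∈ U) (n : ℕ) : -oneOver n U = oneOver n U := by
  ext x
  constructor
  · intro hx k hk hkn
    simpa using hU _ (hx k hk hkn)
  · intro hx k hk hkn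
    simpa using hU _ (hx k hk hkn)

theorem oneOver_anti (U : Set G) : Antitone fun n : ℕ ↦ oneOver n U :=
  fun _ _ hnm _ hx k hk hkn ↦ hx k hk (hkn.trans hnm)

theorem mul_norm_le_of_mem_oneOver {F : Type*} [FunLike F G (AddCircle (1 : ℝ))]
    [AddMonoidHomClass F G (AddCircle (1 : ℝ))] (χ : F) (hχ : ∀ a ∈ U, χ a ∈ Tpos)
    {n : ℕ} {x : G} (hx : x ∈ oneOver n U) : n * ‖χ x‖ ≤ 1 / 4 :=
  mul_norm_le_of_forall_nsmul_norm_le fun j hj hjn ↦ by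
    simpa [mem_Tpos_iff_norm_le] using hχ _ (hx j hj hjn)

end oneOver

namespace QuasiConvex

variable {G : Type*} [AddCommGroup G] [TopologicalSpace G] {U : Set G}

theorem mem_of_forall_map_mem_Tpos (hU : QuasiConvex U) {x : G}
    (h : ∀ χ : ContinuousAddMonoidHom G (AddCircle (1 : ℝ)), (∀ a ∈ U, χ a ∈ Tpos) → χ x ∈ Tpos) :
    x ∈ U := by
  by_contra hx
  obtain ⟨χ, hχU, hχx⟩ := hU x hx
  exact hχx (h χ hχU)

theorem zero_mem (hU : QuasiConvex U) : (0 : G) ∈ U :=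
  hU.mem_of_forall_map_mem_Tpos fun χ _ ↦ by simp [mem_Tpos_iff_norm_le]

theorem neg_mem (hU : QuasiConvex U) {x : G} (hx : x ∈ U) : -x ∈ U :=
  hU.mem_of_forall_map_mem_Tpos fun χ hχ ↦ by simpa [mem_Tpos_iff_norm_le] using hχ x hx

theorem oneOver_two_mul_add_subset (hU : QuasiConvex U) (n : ℕ) :
    oneOver (2 * n) U + oneOver (2 * n) U ⊆ oneOver n U := by
  rintro _ ⟨x, hx, y, hy, rfl⟩ k hk hkn
  refine hU.mem_of_forall_map_mem_Tpos fun χ hχ ↦ ?_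
  have hχx := mul_norm_le_of_mem_oneOver χ hχ hx
  have hχy := mul_norm_le_of_mem_oneOver χ hχ hy
  have hkn' : (k : ℝ) ≤ n := by exact_mod_cast hkn
  rw [mem_Tpos_iff_norm_le, map_nsmul, map_add]
  push_cast at hχx hχy
  calc ‖k • (χ x + χ y)‖ ≤ k * (‖χ x‖ + ‖χ y‖) := norm_nsmul_le.trans
        (by gcongr; exact norm_add_le _ _)
    _ ≤ n * (‖χ x‖ + ‖χ y‖) := by gcongr
    _ ≤ 1 / 4 := by linarith

end QuasiConvex

theorem oneOver_nhds_basis_general {G : Type*} [AddCommGroup G] [TopologicalSpace G]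
    (U : Set G) (hU : QuasiConvex U) :
    (∀ n : ℕ, (0 : G) ∈ oneOver n U) ∧
    (∀ n : ℕ, -(oneOver n U) = oneOver n U) ∧
    (∀ n : ℕ, oneOver (2 * n) U + oneOver (2 * n) U ⊆ oneOver n U) ∧
    (∀ n m : ℕ, oneOver (max n m) U ⊆ oneOver n U ∩ oneOver m U) :=
  ⟨zero_mem_oneOver hU.zero_mem, neg_oneOver fun _ ↦ hU.neg_mem, hU.oneOver_two_mul_add_subset,
    fun n m ↦ Set.subset_inter (oneOver_anti U (le_max_left n m))
      (oneOver_anti U (le_max_right n m))⟩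

/-- For a quasi-convex neighbourhood `U` of `0`, the family `{(1/n)U : n ≥ 1}` satisfies the
axioms of a neighbourhood basis at `0` for a group topology; in particular
`(1/(2n))U + (1/(2n))U ⊆ (1/n)U`. -/
theorem oneOver_nhds_basis {G : Type*} [AddCommGroup G] [TopologicalSpace G]
    [IsTopologicalAddGroup G] (U : Set G) (hU : QuasiConvex U) (hU0 : U ∈ nhds (0 : G)) :
    (∀ n : ℕ, (0 : G) ∈ oneOver n U) ∧
    (∀ n : ℕ, -(oneOver n U) = oneOver n U) ∧
    (∀ n : ℕ, oneOver (2 * n) U + oneOver (2 * n) U ⊆ oneOver n U) ∧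
    (∀ n m : ℕ, oneOver (max n m) U ⊆ oneOver n U ∩ oneOver m U) :=
  oneOver_nhds_basis_general U hU
end

section
/- Let G be an abelian topological group and U a quasi-convex neighbourhood of 0. Then U_∞ := ⋂_{n≥1} (1/n)U equals ⋂_{χ ∈ U^▷} ker χ, and in particular U_∞ is a subgroup of G. -/
namespace AddCircle

lemma exists_coe_eq_abs_eq_norm {p : ℝ} (y : AddCircle p) :
    ∃ r : ℝ, (r : AddCircle p) = y ∧ |r| = ‖y‖ := by
  obtain ⟨x, rfl⟩ := QuotientAddGroup.mk_surjective y
  refine ⟨x - round (p⁻¹ * x) * p, ?_, (norm_eq p).symm⟩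
  have hperiod : ((round (p⁻¹ * x) * p : ℝ) : AddCircle p) = 0 :=
    (coe_eq_zero_iff p).mpr ⟨_, zsmul_eq_mul _ _⟩
  rw [coe_sub, hperiod, sub_zero]

theorem eq_zero_of_forall_norm_nsmul_le {p : ℝ} (hp : p ≠ 0) {y : AddCircle p}
    (h : ∀ n : ℕ, 1 ≤ n → ‖n • y‖ ≤ |p| / 4) : y = 0 := by
  obtain ⟨r, rfl, hr⟩ := exists_coe_eq_abs_eq_norm y
  have hr1 : |r| ≤ |p| / 4 := by simpa [hr] using h 1 le_rfl
  have hmul : ∀ n : ℕ, (n + 1 : ℝ) * |r| ≤ |p| / 4 := by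
    intro n
    induction n with
    | zero => simpa using hr1
    | succ n ih =>
      -- while `(n + 2) r` stays within half a period, its norm in `AddCircle p` is `|(n + 2) r|`
      have hhalf : |(n + 2 : ℕ) * r| ≤ |p| / 2 := by
        push_cast
        rw [abs_mul, abs_of_nonneg (by positivity)]
        linarith
      have := h (n + 2) (by omega)
      rw [← coe_nsmul, nsmul_eq_mul, (norm_coe_eq_abs_iff p hp).mpr hhalf, abs_mul,
        Nat.abs_cast] at this
      push_cast at this ⊢
      linarith
  have hr0 : r = 0 := by
    by_contra hne
    have hpos : 0 < |r| := abs_pos.mpr hne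
    obtain ⟨n, hn⟩ := exists_nat_gt (|p| / 4 / |r|)
    have := hmul n
    rw [div_lt_iff₀ hpos] at hn
    nlinarith
  rw [hr0, coe_zero]

end AddCircle

lemma norm_le_of_mem_Tpos {x : AddCircle (1 : ℝ)} (hx : x ∈ Tpos) : ‖x‖ ≤ 1 / 4 := by
  obtain ⟨r, hr, rfl⟩ := hx
  rwa [(AddCircle.norm_coe_eq_abs_iff 1 one_ne_zero).mpr (by norm_num; linarith)]

lemma zero_mem_Tpos : (0 : AddCircle (1 : ℝ)) ∈ Tpos :=
  ⟨0, by norm_num, AddCircle.coe_zero _⟩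

section PolarKernel

variable {G : Type*} [AddCommGroup G] [TopologicalSpace G]

/-- `⋂_{χ ∈ U^▷} ker χ`. -/
def polarKernel (U : Set G) : AddSubgroup G :=
  ⨅ (χ : ContinuousAddMonoidHom G (AddCircle (1 : ℝ))) (_ : ∀ a ∈ U, χ a ∈ Tpos),
    (χ : G →+ AddCircle (1 : ℝ)).ker

lemma coe_polarKernel (U : Set G) :
    (polarKernel U : Set G) = {x : G | ∀ χ : ContinuousAddMonoidHom G (AddCircle (1 : ℝ)),
        (∀ a ∈ U, χ a ∈ Tpos) → χ x = 0} := by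
  ext x
  simp [polarKernel]

lemma iInter_oneOver_subset_polarKernel (U : Set G) :
    ⋂ n ∈ {n : ℕ | 1 ≤ n}, oneOver n U ⊆ polarKernel U := by
  intro x hx
  rw [coe_polarKernel]
  intro χ hχ
  refine AddCircle.eq_zero_of_forall_norm_nsmul_le one_ne_zero fun n hn => ?_
  have hnx : n • x ∈ U := Set.mem_iInter₂.mp hx n hn n hn le_rfl
  simpa [← map_nsmul] using norm_le_of_mem_Tpos (hχ _ hnx)

lemma polarKernel_subset {U : Set G} (hU : QuasiConvex U) : (polarKernel U : Set G) ⊆ U := by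
  intro x hx
  by_contra hxU
  obtain ⟨χ, hχU, hχx⟩ := hU x hxU
  rw [coe_polarKernel] at hx
  exact hχx (hx χ hχU ▸ zero_mem_Tpos)

lemma polarKernel_subset_oneOver {U : Set G} (hU : QuasiConvex U) (n : ℕ) :
    (polarKernel U : Set G) ⊆ oneOver n U :=
  fun _ hx k _ _ => polarKernel_subset hU (nsmul_mem hx k)

end PolarKernel

theorem uInfty_eq_iInter_ker_general {G : Type*} [AddCommGroup G] [TopologicalSpace G]
    (U : Set G) (hU : QuasiConvex U) :
    (⋂ n ∈ {n : ℕ | 1 ≤ n}, oneOver n U) =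
      {x : G | ∀ χ : ContinuousAddMonoidHom G (AddCircle (1 : ℝ)),
        (∀ a ∈ U, χ a ∈ Tpos) → χ x = 0} ∧
    ∃ H : AddSubgroup G, (H : Set G) = ⋂ n ∈ {n : ℕ | 1 ≤ n}, oneOver n U := by
  have h : ⋂ n ∈ {n : ℕ | 1 ≤ n}, oneOver n U = polarKernel U :=
    (iInter_oneOver_subset_polarKernel U).antisymm
      (Set.subset_iInter₂ fun n _ => polarKernel_subset_oneOver hU n)
  exact ⟨h.trans (coe_polarKernel U), polarKernel U, h.symm⟩

/-- `U_∞ = ⋂_{n ≥ 1} (1/n)U` equals the intersection of the kernels of the characters in the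
polar `U^▷`; in particular it is a subgroup of `G`. -/
theorem uInfty_eq_iInter_ker {G : Type*} [AddCommGroup G] [TopologicalSpace G]
    [IsTopologicalAddGroup G] (U : Set G) (hU : QuasiConvex U) (hU0 : U ∈ nhds (0 : G)) :
    (⋂ n ∈ {n : ℕ | 1 ≤ n}, oneOver n U) =
      {x : G | ∀ χ : ContinuousAddMonoidHom G (AddCircle (1 : ℝ)),
        (∀ a ∈ U, χ a ∈ Tpos) → χ x = 0} ∧
    ∃ H : AddSubgroup G, (H : Set G) = ⋂ n ∈ {n : ℕ | 1 ≤ n}, oneOver n U :=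
  uInfty_eq_iInter_ker_general U hU
end
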